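/- The system t_x+t_y=t_p, t_y+t_z=t_q, t_z+t_x=t_r has infinitely many solutions in positive integers with x < y < z. -/
import Mathlib


def tri (n : ℕ) : ℕ := n * (n + 1) / 2

lemma two_tri (n : ℕ) : 2 * tri n = n * (n + 1) := by
  have h : 2 ∣ n * (n + 1) := (Nat.even_mul_succ_self n).two_dvd
  unfold tri
  exact Nat.mul_div_cancel' h

lemma tri_add_tri {a b c : ℕ} (h : a * (a + 1) + b * (b + 1) = c * (c + 1)) :
    tri a + tri b = tri c := by
  have ha := two_tri a
  have hb := two_tri b
  have hc := two_tri c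
  omega

theorem stmt_3 :
    {s : ℕ × ℕ × ℕ × ℕ × ℕ × ℕ |
      0 < s.1 ∧ s.1 < s.2.1 ∧ s.2.1 < s.2.2.1 ∧
      0 < s.2.2.2.1 ∧ 0 < s.2.2.2.2.1 ∧ 0 < s.2.2.2.2.2 ∧
      tri s.1 + tri s.2.1 = tri s.2.2.2.1 ∧
      tri s.2.1 + tri s.2.2.1 = tri s.2.2.2.2.1 ∧
      tri s.2.2.1 + tri s.1 = tri s.2.2.2.2.2}.Infinite := by
  apply Set.infinite_of_injective_forall_mem
    (f := fun k : ℕ =>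
      (2*k^2+9*k+9, 2*k^3+12*k^2+23*k+13, tri (2*k^2+9*k+9) - 1,
       2*k^3+12*k^2+24*k+16, tri (2*k^2+9*k+9) + (k^2+3*k+1), tri (2*k^2+9*k+9)))
  case hi =>
    intro a b hab
    have h1 : 2*a^2+9*a+9 = 2*b^2+9*b+9 := congrArg (fun s => s.1) hab
    nlinarith [sq_nonneg ((a:ℤ) - b), sq_nonneg ((b:ℤ) - a)]
  case hf =>
    intro k
    have ht : 2 * tri (2*k^2+9*k+9) = (2*k^2+9*k+9) * (2*k^2+9*k+9 + 1) := two_tri _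
    set t : ℕ := tri (2*k^2+9*k+9) with htdef
    have ht1 : 45 ≤ t := by nlinarith [ht]
    have ht' : (2 * t : ℤ) = (2*(k:ℤ)^2+9*k+9) * (2*(k:ℤ)^2+9*k+10) := by
      have := congrArg (Nat.cast : ℕ → ℤ) ht
      push_cast at this
      linarith
    simp only [Set.mem_setOf_eq]
    refine ⟨by positivity, by nlinarith, ?_, by positivity, by positivity, by omega, ?_, ?_, ?_⟩
    · -- Y < t - 1
      have : 2 * (2*k^3+12*k^2+23*k+13) + 4 ≤ 2 * t := by rw [ht]; nlinarith
      omega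
    · apply tri_add_tri
      ring
    · apply tri_add_tri
      zify [show 1 ≤ t by omega]
      linear_combination (-(k:ℤ)^2-3*k-2) * ht'
    · apply tri_add_tri
      zify [show 1 ≤ t by omega]
      linear_combination (-1 : ℤ) * ht'
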